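/- Let $0<\alpha<n$, $\rho>0$, and let $\Omega$ be homogeneous of degree zero, bounded and Lipschitz on $\mathbb{S}^{n-1}$. Let $f\in L^1(\mathbb{R}^n)$ be nonnegative, supported in $B(0,1)$, with $\|f\|_{L^1}=1$, and set $f_t(y)=t^{-n}f(y/t)$. Then for every $x$ with $|x|\ge\rho$ and every $0<t<\rho/2$: $\frac{1-\beta_t}{|x|^{n-\alpha}}\int_{B(0,t)}|\Omega(x-y)|f_t(y)\,dy \le M_{\Omega}^{\alpha}f_t(x) \le \frac{1+\beta_t}{|x|^{n-\alpha}}\int_{B(0,t)}|\Omega(x-y)|f_t(y)\,dy$, where $\beta_t=\rho^{n-\alpha}\big((\rho-t)^{\alpha-n}-(\rho+t)^{\alpha-n}\big)\to 0$ as $t\to0^+$. -/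

import Mathlib

open MeasureTheory Metric Set ENNReal Filter

noncomputable section

abbrev Eucl (n : ℕ) := EuclideanSpace ℝ (Fin n)

/-- `Ω` is homogeneous of degree zero. -/
def Homog (n : ℕ) (Ω : Eucl n → ℝ) : Prop :=
  ∀ r : ℝ, 0 < r → ∀ x : Eucl n, x ≠ 0 → Ω (r • x) = Ω x

/-- Restricted weak `L^q` quasinorm of an `ℝ≥0∞`-valued function on the set `A`. -/
noncomputable def wnormSet {X : Type*} [MeasurableSpace X] (μ : Measure X) (q : ℝ)
    (A : Set X) (g : X → ℝ≥0∞) : ℝ≥0∞ :=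
  ⨆ l : NNReal, (l : ℝ≥0∞) * (μ {x | x ∈ A ∧ (l : ℝ≥0∞) < g x}) ^ (1 / q)

/-- `∫_{S^{n-1}} |Ω|^q dσ`. -/
noncomputable def sphereLpPow (n : ℕ) (q : ℝ) (Ω : Eucl n → ℝ) : ℝ≥0∞ :=
  ∫⁻ x : Metric.sphere (0 : Eucl n) 1, (‖Ω (x : Eucl n)‖₊ : ℝ≥0∞) ^ q
    ∂((volume : Measure (Eucl n)).toSphere)

/-- `‖Ω‖_{L^q(S^{n-1})}`. -/
noncomputable def sphereLpNorm (n : ℕ) (q : ℝ) (Ω : Eucl n → ℝ) : ℝ≥0∞ :=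
  (sphereLpPow n q Ω) ^ (1 / q)

/-- Rough fractional maximal operator. -/
noncomputable def fracMax (n : ℕ) (α : ℝ) (Ω f : Eucl n → ℝ) (x : Eucl n) : ℝ≥0∞ :=
  ⨆ (r : ℝ) (_ : 0 < r), ENNReal.ofReal (r ^ (α - n)) *
    ∫⁻ y in ball x r, (‖Ω (x - y)‖₊ * ‖f y‖₊ : ℝ≥0∞)

/-- Fractional integral with kernel `|Ω|`, applied to `|f|`. -/
noncomputable def fracIntAbs (n : ℕ) (α : ℝ) (Ω f : Eucl n → ℝ) (x : Eucl n) : ℝ≥0∞ :=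
  ∫⁻ y, ((‖Ω (x - y)‖₊ * ‖f y‖₊ : ℝ≥0∞)) / (‖x - y‖₊ : ℝ≥0∞) ^ ((n : ℝ) - α)

/-- Signed fractional integral. -/
noncomputable def fracInt (n : ℕ) (α : ℝ) (Ω f : Eucl n → ℝ) (x : Eucl n) : ℝ :=
  ∫ y, (Ω (x - y) / ‖x - y‖ ^ ((n : ℝ) - α)) * f y

/-- The `L^1`-normalized dilation `f_t(y) = t^{-n} f(y/t)`. -/
noncomputable def dil (n : ℕ) (t : ℝ) (f : Eucl n → ℝ) : Eucl n → ℝ :=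
  fun y => (t ^ n)⁻¹ * f (t⁻¹ • y)

/-- `|a - b|` in `ℝ≥0∞`. -/
noncomputable def ediff (a b : ℝ≥0∞) : ℝ≥0∞ := (a - b) ⊔ (b - a)

/-!
Since `f_t` vanishes outside `closedBall 0 t` and spheres are Lebesgue-null, every ball `B(x, r)`
sees at most the mass of `B(0, t)`, and none of it when `r ≤ |x| - t`. The ball `B(x, |x| + t)`
sees all of it. So `M_Ω^α f_t(x)` lies between `(|x| + t)^(α-n)` and `(|x| - t)^(α-n)` times
`∫_{B(0,t)} |Ω(x - y)| f_t(y) dy`. Writing `(|x| ± t)^(α-n) = |x|^(α-n) (1 ± t/|x|)^(α-n)`, both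
factors `(1 ± t/s)^(α-n)` are monotone in `s`, so `s = |x| ≥ ρ` can be replaced by `ρ`, which is
where `β_t` comes from.
-/

open Topology

namespace Real

variable {e ρ s t : ℝ}

lemma rpow_neg_mul_rpow (hρ : 0 < ρ) (hs : 0 ≤ s) : ρ ^ (-e) * s ^ e = (s / ρ) ^ e := by
  rw [div_rpow hs hρ.le, rpow_neg hρ.le, div_eq_mul_inv, mul_comm]

lemma rpow_neg_mul_add_rpow_le (he : e ≤ 0) (ht : 0 ≤ t) (hρ : 0 < ρ) (hρs : ρ ≤ s) :
    ρ ^ (-e) * (ρ + t) ^ e ≤ s ^ (-e) * (s + t) ^ e := by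
  have hs : 0 < s := hρ.trans_le hρs
  rw [rpow_neg_mul_rpow hρ (by linarith), rpow_neg_mul_rpow hs (by linarith),
    add_div, add_div, div_self hρ.ne', div_self hs.ne']
  exact rpow_le_rpow_of_nonpos (by positivity) (by gcongr) he

lemma rpow_neg_mul_sub_rpow_le (he : e ≤ 0) (ht : 0 ≤ t) (htρ : t < ρ) (hρs : ρ ≤ s) :
    s ^ (-e) * (s - t) ^ e ≤ ρ ^ (-e) * (ρ - t) ^ e := by
  have hρ : 0 < ρ := ht.trans_lt htρ
  have hs : 0 < s := hρ.trans_le hρs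
  rw [rpow_neg_mul_rpow hρ (by linarith), rpow_neg_mul_rpow hs (by linarith),
    sub_div, sub_div, div_self hρ.ne', div_self hs.ne']
  have : 0 < 1 - t / ρ := by rw [sub_pos, div_lt_one hρ]; exact htρ
  exact rpow_le_rpow_of_nonpos this (by gcongr) he

lemma one_le_rpow_neg_mul_sub_rpow (he : e ≤ 0) (ht : 0 ≤ t) (htρ : t < ρ) :
    1 ≤ ρ ^ (-e) * (ρ - t) ^ e := by
  have hρ : 0 < ρ := ht.trans_lt htρ
  rw [rpow_neg_mul_rpow hρ (by linarith)]
  exact one_le_rpow_of_pos_of_le_one_of_nonpos (div_pos (by linarith) hρ)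
    ((div_le_one hρ).2 (by linarith)) he

lemma rpow_neg_mul_add_rpow_le_one (he : e ≤ 0) (ht : 0 ≤ t) (hρ : 0 < ρ) :
    ρ ^ (-e) * (ρ + t) ^ e ≤ 1 := by
  rw [rpow_neg_mul_rpow hρ (by linarith)]
  exact rpow_le_one_of_one_le_of_nonpos ((one_le_div hρ).2 (by linarith)) he

lemma rpow_neg_mul_rpow_self (hs : 0 < s) : s ^ (-e) * s ^ e = 1 := by
  rw [rpow_neg_mul_rpow hs hs.le, div_self hs.ne', one_rpow]

lemma one_sub_mul_rpow_le_add_rpow (he : e ≤ 0) (ht : 0 ≤ t) (htρ : t < ρ) (hρs : ρ ≤ s) :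
    (1 - ρ ^ (-e) * ((ρ - t) ^ e - (ρ + t) ^ e)) * s ^ e ≤ (s + t) ^ e := by
  have hρ : 0 < ρ := ht.trans_lt htρ
  have hs : 0 < s := hρ.trans_le hρs
  calc (1 - ρ ^ (-e) * ((ρ - t) ^ e - (ρ + t) ^ e)) * s ^ e
      ≤ (ρ ^ (-e) * (ρ + t) ^ e) * s ^ e := by
        gcongr
        linarith [one_le_rpow_neg_mul_sub_rpow he ht htρ]
    _ ≤ (s ^ (-e) * (s + t) ^ e) * s ^ e := by
        gcongr ?_ * _
        exact rpow_neg_mul_add_rpow_le he ht hρ hρs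
    _ = (s + t) ^ e := by
        rw [mul_comm (s ^ (-e)), mul_assoc, rpow_neg_mul_rpow_self hs, mul_one]

lemma sub_rpow_le_one_add_mul_rpow (he : e ≤ 0) (ht : 0 ≤ t) (htρ : t < ρ) (hρs : ρ ≤ s) :
    (s - t) ^ e ≤ (1 + ρ ^ (-e) * ((ρ - t) ^ e - (ρ + t) ^ e)) * s ^ e := by
  have hρ : 0 < ρ := ht.trans_lt htρ
  have hs : 0 < s := hρ.trans_le hρs
  calc (s - t) ^ e = (s ^ (-e) * (s - t) ^ e) * s ^ e := by
        rw [mul_comm (s ^ (-e)), mul_assoc, rpow_neg_mul_rpow_self hs, mul_one]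
    _ ≤ (ρ ^ (-e) * (ρ - t) ^ e) * s ^ e := by
        gcongr ?_ * _
        exact rpow_neg_mul_sub_rpow_le he ht htρ hρs
    _ ≤ (1 + ρ ^ (-e) * ((ρ - t) ^ e - (ρ + t) ^ e)) * s ^ e := by
        gcongr
        linarith [rpow_neg_mul_add_rpow_le_one he ht hρ]

lemma tendsto_rpow_neg_mul_sub_rpow_sub_add_rpow (hρ : 0 < ρ) :
    Tendsto (fun t => ρ ^ (-e) * ((ρ - t) ^ e - (ρ + t) ^ e)) (𝓝 0) (𝓝 0) := by
  have hcont : ContinuousAt (fun t => ρ ^ (-e) * ((ρ - t) ^ e - (ρ + t) ^ e)) 0 :=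
    continuousAt_const.mul <|
      ((continuousAt_const.sub continuousAt_id).rpow_const (.inl (by simpa using hρ.ne'))).sub
        ((continuousAt_const.add continuousAt_id).rpow_const (.inl (by simpa using hρ.ne')))
  simpa using hcont.tendsto

end Real

lemma setLIntegral_le_setLIntegral_ball_of_support_subset {E : Type*} [NormedAddCommGroup E]
    [NormedSpace ℝ E] [FiniteDimensional ℝ E] [MeasurableSpace E] [BorelSpace E]
    (μ : Measure E) [μ.IsAddHaarMeasure] {F : E → ℝ≥0∞} {c : E} {t : ℝ} (ht : t ≠ 0)
    (hF : F.support ⊆ closedBall c t) (s : Set E) :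
    ∫⁻ y in s, F y ∂μ ≤ ∫⁻ y in ball c t, F y ∂μ :=
  calc ∫⁻ y in s, F y ∂μ ≤ ∫⁻ y, F y ∂μ := setLIntegral_le_lintegral _ _
    _ = ∫⁻ y in closedBall c t, F y ∂μ := (setLIntegral_eq_of_support_subset hF).symm
    _ = ∫⁻ y in ball c t, F y ∂μ := by
      rw [← ball_union_sphere]
      exact setLIntegral_congr
        (union_ae_eq_left_of_ae_eq_empty (ae_eq_empty.2 (μ.addHaar_sphere_of_ne_zero c ht)))

lemma setLIntegral_eq_zero_of_disjoint_support {X : Type*} [MeasurableSpace X] {μ : Measure X}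
    {F : X → ℝ≥0∞} {s K : Set X} (hs : MeasurableSet s) (hF : F.support ⊆ K)
    (hsK : Disjoint s K) : ∫⁻ y in s, F y ∂μ = 0 := by
  rw [setLIntegral_congr_fun hs fun y hy =>
    Function.notMem_support.1 fun hy' => hsK.notMem_of_mem_left hy (hF hy'), lintegral_zero]

lemma support_dil_subset {n : ℕ} {t R : ℝ} {f : Eucl n → ℝ} (ht : 0 < t)
    (hf : f.support ⊆ closedBall 0 R) : (dil n t f).support ⊆ closedBall 0 (t * R) := by
  intro y hy
  have hfy : t⁻¹ • y ∈ closedBall 0 R :=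
    hf (Function.mem_support.2 fun h => hy (by simp [dil, h]))
  rw [mem_closedBall_zero_iff, norm_smul, norm_inv, Real.norm_of_nonneg ht.le,
    inv_mul_le_iff₀ ht] at hfy
  exact mem_closedBall_zero_iff.2 hfy

lemma support_mul_nnnorm_subset {X : Type*} (G : X → ℝ≥0∞) (f : X → ℝ) :
    (fun y => G y * ‖f y‖₊).support ⊆ f.support := fun y hy h =>
  hy (by simp [show f y = 0 from h])

section FracMax

variable {n : ℕ} {α t : ℝ} {Ω f : Eucl n → ℝ} {x : Eucl n}

lemma le_fracMax {r : ℝ} (hr : 0 < r) :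
    ENNReal.ofReal (r ^ (α - n)) * ∫⁻ y in ball x r, (‖Ω (x - y)‖₊ * ‖f y‖₊ : ℝ≥0∞)
      ≤ fracMax n α Ω f x :=
  le_iSup₂ (f := fun (r : ℝ) (_ : 0 < r) => ENNReal.ofReal (r ^ (α - n)) *
    ∫⁻ y in ball x r, (‖Ω (x - y)‖₊ * ‖f y‖₊ : ℝ≥0∞)) r hr

lemma mul_setLIntegral_ball_zero_le_fracMax (ht : 0 < t) :
    ENNReal.ofReal ((‖x‖ + t) ^ (α - n)) *
        ∫⁻ y in ball 0 t, (‖Ω (x - y)‖₊ * ‖f y‖₊ : ℝ≥0∞)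
      ≤ fracMax n α Ω f x :=
  calc _ ≤ ENNReal.ofReal ((‖x‖ + t) ^ (α - n)) *
        ∫⁻ y in ball x (‖x‖ + t), (‖Ω (x - y)‖₊ * ‖f y‖₊ : ℝ≥0∞) := by
        gcongr
        exact ball_subset_ball' (by rw [dist_zero_left, add_comm])
    _ ≤ fracMax n α Ω f x := le_fracMax (by positivity)

lemma fracMax_le_of_support_subset_closedBall (hαn : α ≤ n) (ht : 0 < t) (htx : t < ‖x‖)
    (hf : f.support ⊆ closedBall 0 t) :
    fracMax n α Ω f x ≤ ENNReal.ofReal ((‖x‖ - t) ^ (α - n)) *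
      ∫⁻ y in ball 0 t, (‖Ω (x - y)‖₊ * ‖f y‖₊ : ℝ≥0∞) := by
  have hF := (support_mul_nnnorm_subset (fun y => (‖Ω (x - y)‖₊ : ℝ≥0∞)) f).trans hf
  refine iSup₂_le fun r hr => ?_
  rcases le_or_gt r (‖x‖ - t) with hrx | hrx
  · rw [setLIntegral_eq_zero_of_disjoint_support measurableSet_ball hF
      (closedBall_disjoint_ball (by rw [dist_zero_left]; linarith)).symm, mul_zero]
    exact zero_le
  · gcongr ?_ * ?_
    · exact ofReal_le_ofReal <|
        Real.rpow_le_rpow_of_nonpos (by linarith : 0 < ‖x‖ - t) hrx.le (sub_nonpos.2 hαn)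
    · exact setLIntegral_le_setLIntegral_ball_of_support_subset volume ht.ne' hF _

end FracMax

theorem stmt13_general (n : ℕ) (α : ℝ) (hαn : α < n) (ρ : ℝ) (hρ : 0 < ρ)
    (Ω : Eucl n → ℝ) (f : Eucl n → ℝ)
    (hsupp : Function.support f ⊆ closedBall (0 : Eucl n) 1)
    (β : ℝ → ℝ)
    (hβ : β = fun t => ρ ^ ((n:ℝ) - α) * ((ρ - t) ^ (α - (n:ℝ)) - (ρ + t) ^ (α - (n:ℝ)))) :
    Tendsto β (nhdsWithin 0 (Ioi 0)) (nhds 0) ∧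
    ∀ t : ℝ, 0 < t → t < ρ / 2 → ∀ x : Eucl n, ρ ≤ ‖x‖ →
      (ENNReal.ofReal ((1 - β t) * ‖x‖ ^ (α - (n:ℝ))) *
          (∫⁻ y in ball (0 : Eucl n) t, (‖Ω (x - y)‖₊ * ‖dil n t f y‖₊ : ℝ≥0∞))
        ≤ fracMax n α Ω (dil n t f) x ∧
      fracMax n α Ω (dil n t f) x ≤
        ENNReal.ofReal ((1 + β t) * ‖x‖ ^ (α - (n:ℝ))) *
          (∫⁻ y in ball (0 : Eucl n) t, (‖Ω (x - y)‖₊ * ‖dil n t f y‖₊ : ℝ≥0∞))) := by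
  subst hβ
  simp only [← neg_sub α (n : ℝ)]
  refine ⟨(Real.tendsto_rpow_neg_mul_sub_rpow_sub_add_rpow hρ).mono_left nhdsWithin_le_nhds,
    fun t ht htρ x hx => ?_⟩
  have he : α - n ≤ 0 := by linarith
  have htρ' : t < ρ := by linarith
  constructor
  · calc _ ≤ ENNReal.ofReal ((‖x‖ + t) ^ (α - n)) *
          ∫⁻ y in ball 0 t, (‖Ω (x - y)‖₊ * ‖dil n t f y‖₊ : ℝ≥0∞) := by
          gcongr
          exact Real.one_sub_mul_rpow_le_add_rpow he ht.le htρ' hx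
      _ ≤ _ := mul_setLIntegral_ball_zero_le_fracMax ht
  · calc _ ≤ ENNReal.ofReal ((‖x‖ - t) ^ (α - n)) *
          ∫⁻ y in ball 0 t, (‖Ω (x - y)‖₊ * ‖dil n t f y‖₊ : ℝ≥0∞) :=
          fracMax_le_of_support_subset_closedBall hαn.le ht (by linarith)
            (by simpa using support_dil_subset ht hsupp)
      _ ≤ _ := by
          gcongr
          exact Real.sub_rpow_le_one_add_mul_rpow he ht.le htρ' hx

theorem stmt13 (n : ℕ) (α : ℝ) (hα : 0 < α) (hαn : α < n) (ρ : ℝ) (hρ : 0 < ρ)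
    (Ω : Eucl n → ℝ) (B L : ℝ) (hmeas : Measurable Ω) (hhom : Homog n Ω)
    (hB : ∀ u ∈ sphere (0 : Eucl n) 1, |Ω u| ≤ B)
    (hL : ∀ u ∈ sphere (0 : Eucl n) 1, ∀ v ∈ sphere (0 : Eucl n) 1,
      |Ω u - Ω v| ≤ L * ‖u - v‖)
    (f : Eucl n → ℝ) (hf : Integrable f) (hpos : ∀ y, 0 ≤ f y)
    (hsupp : Function.support f ⊆ closedBall (0 : Eucl n) 1)
    (hnorm : (∫ y, f y) = 1)
    (β : ℝ → ℝ)
    (hβ : β = fun t => ρ ^ ((n:ℝ) - α) * ((ρ - t) ^ (α - (n:ℝ)) - (ρ + t) ^ (α - (n:ℝ)))) :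
    Tendsto β (nhdsWithin 0 (Ioi 0)) (nhds 0) ∧
    ∀ t : ℝ, 0 < t → t < ρ / 2 → ∀ x : Eucl n, ρ ≤ ‖x‖ →
      (ENNReal.ofReal ((1 - β t) * ‖x‖ ^ (α - (n:ℝ))) *
          (∫⁻ y in ball (0 : Eucl n) t, (‖Ω (x - y)‖₊ * ‖dil n t f y‖₊ : ℝ≥0∞))
        ≤ fracMax n α Ω (dil n t f) x ∧
      fracMax n α Ω (dil n t f) x ≤
        ENNReal.ofReal ((1 + β t) * ‖x‖ ^ (α - (n:ℝ))) *
          (∫⁻ y in ball (0 : Eucl n) t, (‖Ω (x - y)‖₊ * ‖dil n t f y‖₊ : ℝ≥0∞))) :=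
  stmt13_general n α hαn ρ hρ Ω f hsupp β hβ
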